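/- arXiv:2303.11773 — 2 statements merged into one kernel-verified Lean document; each statement's English description precedes it below -/
import Mathlib

section
/- Subtree lemma for primary active sets (abstract form): Let Q = {1,...,q} be totally ordered and let A_i, A_p ⊆ Q be finite subsets with A_i ≠ A_p and min(A_p \ A_i) < min(A_i \ A_p). Let π : Q → Q be a bijection with π(A_i) = A_p (image of the set). Let A_j = A_i ∪ Â where Â ⊆ { k ∈ Q | k > max(A_i) }, and set A_k = π(A_j). Then A_k ≠ A_j and min(A_k \ A_j) < min(A_j \ A_k). -/
theorem stmt_12 {q : ℕ} (Ai Ap : Finset (Fin q)) (π : Fin q → Fin q)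
    (hπ : Function.Bijective π) (him : Ai.image π = Ap)
    (hne : Ai ≠ Ap) (hAi : Ai.Nonempty)
    (hmin : (Ap \ Ai).min < (Ai \ Ap).min)
    (Ah : Finset (Fin q)) (hAh : ∀ a ∈ Ah, Ai.max' hAi < a) :
    (Ai ∪ Ah).image π ≠ Ai ∪ Ah ∧
    ((Ai ∪ Ah).image π \ (Ai ∪ Ah)).min < ((Ai ∪ Ah) \ (Ai ∪ Ah).image π).min := by
  have hcard : Ai.card = Ap.card := by
    rw [← him, Finset.card_image_of_injective _ hπ.1]
  have hAiAp : (Ai \ Ap).Nonempty := by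
    rw [Finset.sdiff_nonempty]
    intro h
    exact hne (Finset.eq_of_subset_of_card_le h hcard.ge)
  have hApAi : (Ap \ Ai).Nonempty := by
    rw [Finset.sdiff_nonempty]
    intro h
    exact hne.symm (Finset.eq_of_subset_of_card_le h hcard.le)
  set x := (Ai \ Ap).min' hAiAp with hx
  set m := (Ap \ Ai).min' hApAi with hm
  rw [← Finset.coe_min' hAiAp, ← Finset.coe_min' hApAi] at hmin
  have hmx : m < x := WithTop.coe_lt_coe.mp hmin
  have hxAi : x ∈ Ai := (Finset.mem_sdiff.mp (Finset.min'_mem _ hAiAp)).1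
  have hmAp : m ∈ Ap := (Finset.mem_sdiff.mp (Finset.min'_mem _ hApAi)).1
  have hmAi : m ∉ Ai := (Finset.mem_sdiff.mp (Finset.min'_mem _ hApAi)).2
  have hxmax : x ≤ Ai.max' hAi := Finset.le_max' _ _ hxAi
  have hmAh : m ∉ Ah := fun h => absurd (lt_trans (lt_of_lt_of_le hmx hxmax) (hAh m h)) (lt_irrefl m)
  have hmim : m ∈ (Ai ∪ Ah).image π := by
    rw [Finset.image_union]
    exact Finset.mem_union_left _ (him ▸ hmAp)
  have hmnot : m ∉ Ai ∪ Ah := by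
    rw [Finset.mem_union]; tauto
  have hmem : m ∈ (Ai ∪ Ah).image π \ (Ai ∪ Ah) := Finset.mem_sdiff.mpr ⟨hmim, hmnot⟩
  refine ⟨fun h => hmnot (h ▸ hmim), ?_⟩
  calc ((Ai ∪ Ah).image π \ (Ai ∪ Ah)).min ≤ (m : WithTop (Fin q)) := Finset.min_le hmem
    _ < ((Ai ∪ Ah) \ (Ai ∪ Ah).image π).min := by
        rcases Finset.eq_empty_or_nonempty ((Ai ∪ Ah) \ (Ai ∪ Ah).image π) with h | h
        · rw [h, Finset.min_empty]; exact WithTop.coe_lt_top m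
        rw [← Finset.coe_min' h, WithTop.coe_lt_coe, Finset.lt_min'_iff]
        intro y hy
        rw [Finset.mem_sdiff, Finset.mem_union] at hy
        obtain ⟨hy1 | hy1, hy2⟩ := hy
        · have : y ∉ Ap := fun h => hy2 (by rw [Finset.image_union]; exact Finset.mem_union_left _ (him ▸ h))
          have : x ≤ y := Finset.min'_le _ _ (Finset.mem_sdiff.mpr ⟨hy1, this⟩)
          exact lt_of_lt_of_le hmx this
        · exact (lt_trans (lt_of_lt_of_le hmx hxmax) (hAh y hy1))
end

section
/- For finite sets A_i, A_p, Â, B̂ of natural numbers with Â ⊆ { k | k > max(A_i) } and A_i ≠ A_p: the inequality min((A_p ∪ B̂) \ (A_i ∪ Â)) < min((A_i ∪ Â) \ (A_p ∪ B̂)) holds if and only if min((A_p ∪ B̂) \ A_i) < min(A_i \ (A_p ∪ B̂)), provided these difference sets are nonempty. -/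
theorem stmt_13 (Ai Ap Ah Bh : Finset ℕ) (hAi : Ai.Nonempty)
    (hAh : ∀ a ∈ Ah, Ai.max' hAi < a) (hne : Ai ≠ Ap)
    (h1 : ((Ap ∪ Bh) \ (Ai ∪ Ah)).Nonempty) (h2 : ((Ai ∪ Ah) \ (Ap ∪ Bh)).Nonempty)
    (h3 : ((Ap ∪ Bh) \ Ai).Nonempty) (h4 : (Ai \ (Ap ∪ Bh)).Nonempty) :
    ((Ap ∪ Bh) \ (Ai ∪ Ah)).min' h1 < ((Ai ∪ Ah) \ (Ap ∪ Bh)).min' h2 ↔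
    ((Ap ∪ Bh) \ Ai).min' h3 < (Ai \ (Ap ∪ Bh)).min' h4 := by
  set M := Ai.max' hAi with hM
  set m1 := ((Ap ∪ Bh) \ (Ai ∪ Ah)).min' h1 with hm1
  set m2 := ((Ai ∪ Ah) \ (Ap ∪ Bh)).min' h2 with hm2
  set m3 := ((Ap ∪ Bh) \ Ai).min' h3 with hm3
  set m4 := (Ai \ (Ap ∪ Bh)).min' h4 with hm4
  obtain ⟨h4a, h4b⟩ := Finset.mem_sdiff.1 (Finset.min'_mem _ h4)
  have hm4M : m4 ≤ M := Finset.le_max' Ai _ h4a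
  have h24 : m2 ≤ m4 :=
    Finset.min'_le _ _ (Finset.mem_sdiff.2 ⟨Finset.mem_union_left _ h4a, h4b⟩)
  have h42 : m2 = m4 := by
    obtain ⟨ha, hb⟩ := Finset.mem_sdiff.1 (Finset.min'_mem _ h2)
    rcases Finset.mem_union.1 ha with h | h
    · exact le_antisymm h24 (Finset.min'_le _ _ (Finset.mem_sdiff.2 ⟨h, hb⟩))
    · exact absurd (hAh _ h) (by omega)
  obtain ⟨h1a, h1b⟩ := Finset.mem_sdiff.1 (Finset.min'_mem _ h1)
  have h31 : m3 ≤ m1 := by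
    refine Finset.min'_le _ _ (Finset.mem_sdiff.2 ⟨h1a, fun hc => h1b ?_⟩)
    exact Finset.mem_union_left _ hc
  obtain ⟨h3a, h3b⟩ := Finset.mem_sdiff.1 (Finset.min'_mem _ h3)
  by_cases hc : m3 ∈ Ah
  · have := hAh _ hc
    omega
  · have h13 : m1 ≤ m3 := by
      refine Finset.min'_le _ _ (Finset.mem_sdiff.2 ⟨h3a, fun hc' => ?_⟩)
      rcases Finset.mem_union.1 hc' with h | h
      · exact h3b h
      · exact hc h
    omega
end
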